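/- Let n, d be positive integers, ε > 0, and 0 ≤ δ ≤ 1. Suppose f : {0,1}^n → ℝ^d is (ε,δ)-concentrated at some μ ∈ ℝ^d. Define g : {0,1}^n → ℝ^d by g(X)_j = 2εm + ε where m is the unique integer with f(X)_j ∈ [2εm, 2ε(m+1)). Let X be uniform on {0,1}^n. Then the Shannon entropy of g(X), namely H(g(X)) = ∑_y Pr[g(X) = y]·log₂(1/Pr[g(X) = y]) (the sum ranging over the finitely many values y of g, with the convention 0·log₂(1/0) = 0), satisfies H(g(X)) ≤ δ·n + d + 1. -/

import Mathlib

open Classical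

/-- Probability of `P` under the uniform distribution on a finite type. -/
noncomputable def pr {α : Type*} [Fintype α] (P : α → Prop) : ℝ :=
  ((Finset.univ.filter P).card : ℝ) / (Fintype.card α : ℝ)

/-- `f : {0,1}^n → ℝ^d` is `(ε,δ)`-concentrated at `μ`. -/
def Concentrated (n d : ℕ) (ε δ : ℝ)
    (f : (Fin n → Bool) → Fin d → ℝ) (μ : Fin d → ℝ) : Prop :=
  pr (fun X : Fin n → Bool => ∃ j, |f X j - μ j| > ε) ≤ δ

/-- Rounds `x` to the midpoint of the half-open interval `[L·m, L·(m+1))` containing it;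
for `L = 2ε` this is `2εm + ε` where `x ∈ [2εm, 2ε(m+1))`. -/
noncomputable def roundMid (L x : ℝ) : ℝ := L * ⌊x / L⌋ + L / 2

/-!
Call an outcome `X` good when every coordinate of `f X` is within `ε` of `μ`. An interval of
length `2ε` meets at most two rounding cells, so on good outcomes `g` takes at most `2 ^ d`
values, while the bad outcomes have probability `q ≤ δ` and `g` takes at most `2 ^ n` values on
them. Grouping the values of `g` accordingly, the entropy of `g(X)` is at most
`h(q) + (1 - q) d + q n ≤ 1 + d + δ n`, where `h` is the binary entropy.
-/

open Finset Real

section UniformProbability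

variable {α β : Type*} [Fintype α]

lemma pr_nonneg (P : α → Prop) : 0 ≤ pr P := by
  unfold pr; positivity

lemma pr_mono {P Q : α → Prop} (h : ∀ x, P x → Q x) : pr P ≤ pr Q := by
  unfold pr
  gcongr
  exact h _

lemma sum_pr_eq_pr_mem (g : α → β) (t : Finset β) :
    ∑ y ∈ t, pr (fun x => g x = y) = pr (fun x => g x ∈ t) := by
  unfold pr
  rw [← sum_div, ← Nat.cast_sum]
  congr 2
  convert sum_card_fiberwise_eq_card_filter univ t g

lemma sum_pr_image_eq_one [Nonempty α] [DecidableEq β] (g : α → β) :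
    ∑ y ∈ univ.image g, pr (fun x => g x = y) = 1 := by
  have hmem : ∀ x, g x ∈ univ.image g := fun x => mem_image_of_mem g (mem_univ x)
  rw [sum_pr_eq_pr_mem]
  simp [pr, hmem]

end UniformProbability

lemma log_natCast_le_log_natCast {m n : ℕ} (h : m ≤ n) : log m ≤ log n := by
  rcases m.eq_zero_or_pos with rfl | hm
  · simpa using log_natCast_nonneg n
  · exact log_le_log (by exact_mod_cast hm) (by exact_mod_cast h)

lemma mul_logb_one_div_eq_negMulLog_div (b x : ℝ) : x * logb b (1 / x) = negMulLog x / log b := by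
  rw [logb, one_div, log_inv, negMulLog]; ring

lemma sum_negMulLog_le {ι : Type*} (s : Finset ι) (p : ι → ℝ) (hp : ∀ i ∈ s, 0 ≤ p i) :
    ∑ i ∈ s, negMulLog (p i) ≤ negMulLog (∑ i ∈ s, p i) + (∑ i ∈ s, p i) * log #s := by
  rcases s.eq_empty_or_nonempty with rfl | hs
  · simp
  have hc : (0 : ℝ) < #s := by exact_mod_cast hs.card_pos
  have jensen := concaveOn_negMulLog.le_map_sum (t := s) (w := fun _ => (#s : ℝ)⁻¹) (p := p)
    (fun _ _ => by positivity) (by simp [hc.ne']) hp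
  simp only [smul_eq_mul, ← mul_sum] at jensen
  calc ∑ i ∈ s, negMulLog (p i)
      = #s * ((#s : ℝ)⁻¹ * ∑ i ∈ s, negMulLog (p i)) := by field_simp
    _ ≤ #s * negMulLog ((#s : ℝ)⁻¹ * ∑ i ∈ s, p i) := by gcongr
    _ = negMulLog (∑ i ∈ s, p i) + (∑ i ∈ s, p i) * log #s := by
      rw [mul_comm _ (∑ i ∈ s, p i), negMulLog_mul]
      simp only [negMulLog, log_inv]
      field_simp

lemma sum_negMulLog_le_binEntropy_add {ι : Type*} (s : Finset ι) (P : ι → Prop) [DecidablePred P]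
    (p : ι → ℝ) (hp : ∀ i ∈ s, 0 ≤ p i) (hsum : ∑ i ∈ s, p i = 1) :
    ∑ i ∈ s, negMulLog (p i) ≤ binEntropy (∑ i ∈ s with ¬P i, p i) +
      (∑ i ∈ s with P i, p i) * log #{i ∈ s | P i} +
      (∑ i ∈ s with ¬P i, p i) * log #{i ∈ s | ¬P i} := by
  have hsplit := sum_filter_add_sum_filter_not s P p
  have hgood := sum_negMulLog_le {i ∈ s | P i} p fun i hi => hp i (mem_filter.mp hi).1
  have hbad := sum_negMulLog_le {i ∈ s | ¬P i} p fun i hi => hp i (mem_filter.mp hi).1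
  rw [← sum_filter_add_sum_filter_not s P, binEntropy_eq_negMulLog_add_negMulLog_one_sub,
    ← hsum, ← hsplit, add_sub_cancel_right]
  linarith

theorem entropy_le_of_pr_notMem_le {α β : Type*} [Fintype α] [Nonempty α] [DecidableEq β]
    (g : α → β) (C : Finset β) {k : ℕ} (hC : #C ≤ 2 ^ k) {δ : ℝ} (hδ : pr (fun x => g x ∉ C) ≤ δ) :
    ∑ y ∈ univ.image g, pr (fun x => g x = y) * logb 2 (1 / pr (fun x => g x = y)) ≤
      δ * logb 2 (Fintype.card α) + k + 1 := by
  set s := univ.image g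
  set q := ∑ y ∈ s with y ∉ C, pr (fun x => g x = y)
  have hsum : ∑ y ∈ s, pr (fun x => g x = y) = 1 := sum_pr_image_eq_one g
  have hq : q ≤ δ :=
    calc q = pr (fun x => g x ∈ s.filter (· ∉ C)) := sum_pr_eq_pr_mem _ _
      _ ≤ δ := (pr_mono fun x hx => (mem_filter.mp hx).2).trans hδ
  have hq0 : 0 ≤ q := sum_nonneg fun y _ => pr_nonneg _
  have hgood : ∑ y ∈ s with y ∈ C, pr (fun x => g x = y) = 1 - q := by
    rw [← hsum, ← sum_filter_add_sum_filter_not s (· ∈ C)]; ring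
  have hgood_card : log #{y ∈ s | y ∈ C} ≤ k * log 2 := by
    rw [← log_pow, ← Nat.cast_ofNat, ← Nat.cast_pow]
    exact log_natCast_le_log_natCast ((card_le_card fun y hy => (mem_filter.mp hy).2).trans hC)
  have hbad_card : log #{y ∈ s | y ∉ C} ≤ log (Fintype.card α) :=
    log_natCast_le_log_natCast ((card_filter_le _ _).trans card_image_le)
  have hlog2 : 0 < log 2 := log_pos one_lt_two
  simp only [mul_logb_one_div_eq_negMulLog_div, ← sum_div]
  rw [div_le_iff₀ hlog2]
  calc ∑ y ∈ s, negMulLog (pr fun x => g x = y)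
      ≤ binEntropy q + (1 - q) * log #{y ∈ s | y ∈ C} + q * log #{y ∈ s | y ∉ C} := by
        rw [← hgood]
        exact sum_negMulLog_le_binEntropy_add s (fun y => y ∈ C) _ (fun y _ => pr_nonneg _) hsum
    _ ≤ log 2 + 1 * (k * log 2) + δ * log (Fintype.card α) := by
        gcongr ?_ + ?_ + ?_
        · exact binEntropy_le_log_two
        · exact mul_le_mul (by linarith) hgood_card (log_natCast_nonneg _) zero_le_one
        · exact mul_le_mul hq hbad_card (log_natCast_nonneg _) (hq0.trans hq)
    _ = (δ * logb 2 (Fintype.card α) + k + 1) * log 2 := by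
        rw [logb]; field_simp; ring

lemma roundMid_mem_of_le_of_le_add {L a x : ℝ} (hL : 0 < L) (hax : a ≤ x) (hxa : x ≤ a + L) :
    roundMid L x ∈ ({roundMid L a, roundMid L a + L} : Finset ℝ) := by
  have hlo : ⌊a / L⌋ ≤ ⌊x / L⌋ := Int.floor_mono (by gcongr)
  have hhi : ⌊x / L⌋ ≤ ⌊a / L⌋ + 1 := by
    rw [← Int.floor_add_one]
    refine Int.floor_mono ?_
    rw [div_add_one hL.ne']
    gcongr
  obtain h | h : ⌊x / L⌋ = ⌊a / L⌋ ∨ ⌊x / L⌋ = ⌊a / L⌋ + 1 := by omega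
  · simp [roundMid, h]
  · refine mem_insert_of_mem (mem_singleton.mpr ?_)
    simp only [roundMid, h]
    push_cast
    ring

lemma card_piFinset_pair_le {ι γ : Type*} [Fintype ι] [DecidableEq ι] [DecidableEq γ]
    (a b : ι → γ) : #(Fintype.piFinset fun i => ({a i, b i} : Finset γ)) ≤ 2 ^ Fintype.card ι := by
  rw [Fintype.card_piFinset]
  exact prod_le_pow_card _ _ _ fun _ _ => card_le_two

lemma roundMid_mem_piFinset_of_abs_sub_le {ι : Type*} [Fintype ι] [DecidableEq ι] {ε : ℝ}
    (hε : 0 < ε) {x μ : ι → ℝ} (h : ∀ i, |x i - μ i| ≤ ε) :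
    (fun i => roundMid (2 * ε) (x i)) ∈ Fintype.piFinset fun i =>
      ({roundMid (2 * ε) (μ i - ε), roundMid (2 * ε) (μ i - ε) + 2 * ε} : Finset ℝ) := by
  refine Fintype.mem_piFinset.mpr fun i => ?_
  obtain ⟨hlo, hhi⟩ := abs_le.mp (h i)
  exact roundMid_mem_of_le_of_le_add (by positivity) (by linarith) (by linarith)

theorem rounded_entropy_bound_general (n d : ℕ)
    (ε : ℝ) (hε : 0 < ε) (δ : ℝ)
    (f : (Fin n → Bool) → Fin d → ℝ) (μ : Fin d → ℝ)
    (hf : Concentrated n d ε δ f μ) :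
    (∑ y ∈ Finset.univ.image (fun X : Fin n → Bool => fun j : Fin d => roundMid (2 * ε) (f X j)),
        pr (fun X : Fin n → Bool => (fun j : Fin d => roundMid (2 * ε) (f X j)) = y) *
          Real.logb 2 (1 / pr (fun X : Fin n → Bool => (fun j : Fin d => roundMid (2 * ε) (f X j)) = y)))
      ≤ δ * n + d + 1 := by
  have hbad : pr (fun X => (fun j => roundMid (2 * ε) (f X j)) ∉ Fintype.piFinset fun j =>
      ({roundMid (2 * ε) (μ j - ε), roundMid (2 * ε) (μ j - ε) + 2 * ε} : Finset ℝ)) ≤ δ := by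
    refine (pr_mono fun X hX => ?_).trans hf
    by_contra! hnear
    exact hX (roundMid_mem_piFinset_of_abs_sub_le hε hnear)
  have hcard := card_piFinset_pair_le (fun j => roundMid (2 * ε) (μ j - ε))
    fun j => roundMid (2 * ε) (μ j - ε) + 2 * ε
  rw [Fintype.card_fin] at hcard
  simpa [logb_pow] using entropy_le_of_pr_notMem_le _ _ hcard hbad

/-- if `f : {0,1}^n → ℝ^d` is `(ε,δ)`-concentrated and `g` rounds each
coordinate of `f` to the midpoint of the length-`2ε` half-open interval containing it,
then the Shannon entropy of `g(X)` for uniform `X` is at most `δ·n + d + 1`. -/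
theorem rounded_entropy_bound (n d : ℕ) (hn : 0 < n) (hd : 0 < d)
    (ε : ℝ) (hε : 0 < ε) (δ : ℝ) (hδ0 : 0 ≤ δ) (hδ1 : δ ≤ 1)
    (f : (Fin n → Bool) → Fin d → ℝ) (μ : Fin d → ℝ)
    (hf : Concentrated n d ε δ f μ) :
    (∑ y ∈ Finset.univ.image (fun X : Fin n → Bool => fun j : Fin d => roundMid (2 * ε) (f X j)),
        pr (fun X : Fin n → Bool => (fun j : Fin d => roundMid (2 * ε) (f X j)) = y) *
          Real.logb 2 (1 / pr (fun X : Fin n → Bool => (fun j : Fin d => roundMid (2 * ε) (f X j)) = y)))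
      ≤ δ * n + d + 1 :=
  rounded_entropy_bound_general n d ε hε δ f μ hf
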